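/- Let X ∈ ℝ^{m×n} and let r be a non-negative integer with r ≤ min(m,n). Then there exist real matrices A ∈ ℝ^{r×m} and B ∈ ℝ^{r×n} with A·Aᵀ = I_r and B·Bᵀ = I_r such that tr(A·X·Bᵀ) = Σ_{i=1}^{r} σ_i(X); consequently the maximum of tr(A·X·Bᵀ) over all such pairs (A,B) equals Σ_{i=1}^{r} σ_i(X). -/

import Mathlib

open Matrix

theorem Matrix.isHermitian_transpose_mul_self {m n : Type*} [Fintype m]
    (A : Matrix m n ℝ) : (Aᵀ * A).IsHermitian := by
  simpa using Matrix.isHermitian_conjTranspose_mul_self A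

/-- The `i`-th singular value (0-indexed, in decreasing order) of a real `m × n` matrix `X`:
the nonnegative square roots of the eigenvalues of `Xᵀ * X`, sorted decreasingly,
with value `0` for indices `i ≥ n`. -/
noncomputable def sval {m n : ℕ} (X : Matrix (Fin m) (Fin n) ℝ) (i : ℕ) : ℝ :=
  if h : i < n then
    Real.sqrt ((Matrix.isHermitian_transpose_mul_self X).eigenvalues
      (Tuple.sort (fun j => -((Matrix.isHermitian_transpose_mul_self X).eigenvalues j)) ⟨i, h⟩))
  else 0

/-!
Diagonalising `Xᵀ X` by an orthogonal `W` with decreasingly sorted eigenvalues gives a thin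
singular value decomposition `X W = U Σ`, `Σ = diag σ`, where the columns of `U` are orthonormal
or zero. Taking for `B` the first `r` rows of `Wᵀ`, and for `A` an orthonormal completion of the
nonzero ones among the first `r` columns of `U`, attains `∑_{i<r} σᵢ`.

Conversely `tr (A X Bᵀ) = tr (P Σ Qᵀ)` with `P = A U` and `Q = B W`. By AM-GM this is at most
`∑ⱼ σⱼ eⱼ`, where `eⱼ` is the mean of the squared norms of the `j`-th columns of `P` and `Q`.
Both `P` and `Q` are products of a matrix with orthonormal rows and a partial isometry, so
`0 ≤ eⱼ ≤ 1` and `∑ⱼ eⱼ ≤ r`; for decreasing `σ` such a weighted sum is largest when the first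
`r` weights are `1`.
-/

open Finset

namespace Matrix

theorem mul_mul_transpose_apply_self {α k k' : Type*} [Fintype k] [CommSemiring α]
    (A : Matrix k' k α) (P : Matrix k k α) (i : k') :
    (A * P * Aᵀ) i i = A i ⬝ᵥ (P *ᵥ A i) :=
  (dotProduct_mulVec (A i) P (A i)).symm

theorem submatrix_mul_transpose_submatrix_id {α k l k' : Type*} [Fintype l] [Mul α]
    [AddCommMonoid α] (M : Matrix k l α) (e : k' → k) :
    M.submatrix e id * (M.submatrix e id)ᵀ = (M * Mᵀ).submatrix e e :=
  rfl

section OrderedRing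

variable {R : Type*} [CommRing R] [LinearOrder R] [IsStrictOrderedRing R] {k l : Type*}
  [Fintype k]

theorem transpose_eq_zero_of_transpose_mul_self_apply_self_eq_zero {M : Matrix k l R} {j : l}
    (h : (Mᵀ * M) j j = 0) : Mᵀ j = 0 :=
  dotProduct_self_eq_zero.1 h

theorem two_mul_dotProduct_le (x y : k → R) : 2 * (x ⬝ᵥ y) ≤ x ⬝ᵥ x + y ⬝ᵥ y := by
  simp only [dotProduct, Finset.mul_sum, ← Finset.sum_add_distrib]
  exact sum_le_sum fun i _ => by nlinarith [sq_nonneg (x i - y i)]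

theorem dotProduct_mulVec_le_dotProduct_self_of_isIdempotentElem {P : Matrix k k R}
    (hPt : P.IsSymm) (hP : IsIdempotentElem P) (y : k → R) : y ⬝ᵥ (P *ᵥ y) ≤ y ⬝ᵥ y := by
  have hPy : (P *ᵥ y) ⬝ᵥ (P *ᵥ y) = y ⬝ᵥ (P *ᵥ y) := by
    rw [dotProduct_mulVec, vecMul_mulVec, ← mulVec_transpose, hPt.eq, hP.eq, dotProduct_comm,
      hPt.eq]
  have : 0 ≤ (y - P *ᵥ y) ⬝ᵥ (y - P *ᵥ y) := sum_nonneg fun _ _ => mul_self_nonneg _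
  rw [sub_dotProduct, dotProduct_sub, dotProduct_sub, hPy, dotProduct_comm (P *ᵥ y) y] at this
  linarith

theorem apply_self_le_one_of_isIdempotentElem [DecidableEq k] {P : Matrix k k R}
    (hPt : P.IsSymm) (hP : IsIdempotentElem P) (i : k) : P i i ≤ 1 := by
  simpa using dotProduct_mulVec_le_dotProduct_self_of_isIdempotentElem hPt hP (Pi.single i 1)

theorem mul_transpose_mul_self_eq_self [Fintype l] [DecidableEq l] {U : Matrix k l R}
    {d : l → R} (hU : Uᵀ * U = diagonal d) (hd : ∀ j, d j = 0 ∨ d j = 1) : U * Uᵀ * U = U := by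
  ext a j
  rw [Matrix.mul_assoc, hU, mul_diagonal]
  rcases hd j with h | h
  · have hcol := transpose_eq_zero_of_transpose_mul_self_apply_self_eq_zero
      (show (Uᵀ * U) j j = 0 by rw [hU, diagonal_apply_eq, h])
    rw [h, mul_zero, ← transpose_apply U, hcol, Pi.zero_apply]
  · rw [h, mul_one]

variable [Fintype l] {k' : Type*} [Fintype k'] [DecidableEq k'] {A : Matrix k' k R}
  {M : Matrix k l R}

theorem mul_transpose_mul_self_apply_self_le_one [DecidableEq l] (hA : A * Aᵀ = 1)
    (hM : M * Mᵀ * M = M) (j : l) : ((A * M)ᵀ * (A * M)) j j ≤ 1 := by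
  have hAA : IsIdempotentElem (Aᵀ * A) := by
    rw [IsIdempotentElem, Matrix.mul_assoc, ← Matrix.mul_assoc A, hA, Matrix.one_mul]
  have hMM : IsIdempotentElem (Mᵀ * M) := by
    rw [IsIdempotentElem, Matrix.mul_assoc, ← Matrix.mul_assoc M, hM]
  calc ((A * M)ᵀ * (A * M)) j j = Mᵀ j ⬝ᵥ ((Aᵀ * A) *ᵥ Mᵀ j) := by
        simp only [← mul_mul_transpose_apply_self, transpose_mul, transpose_transpose,
          Matrix.mul_assoc]
    _ ≤ Mᵀ j ⬝ᵥ Mᵀ j :=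
        dotProduct_mulVec_le_dotProduct_self_of_isIdempotentElem (by simp [IsSymm]) hAA _
    _ ≤ 1 := apply_self_le_one_of_isIdempotentElem (by simp [IsSymm]) hMM j

theorem trace_mul_mul_transpose_le_card (hA : A * Aᵀ = 1) (hM : M * Mᵀ * M = M) :
    trace ((A * M) * (A * M)ᵀ) ≤ Fintype.card k' := by
  have hMM : IsIdempotentElem (M * Mᵀ) := by rw [IsIdempotentElem, ← Matrix.mul_assoc, hM]
  calc trace ((A * M) * (A * M)ᵀ) = ∑ i, A i ⬝ᵥ ((M * Mᵀ) *ᵥ A i) := by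
        simp only [trace, diag, ← mul_mul_transpose_apply_self, transpose_mul, Matrix.mul_assoc]
    _ ≤ ∑ i, A i ⬝ᵥ A i := sum_le_sum fun i _ =>
        dotProduct_mulVec_le_dotProduct_self_of_isIdempotentElem (by simp [IsSymm]) hMM _
    _ = Fintype.card k' := by simpa [trace, diag, mul_apply'] using congrArg trace hA

end OrderedRing

end Matrix

theorem Finset.sum_mul_le_sum_range_of_antitone {R : Type*} [CommRing R] [LinearOrder R]
    [IsStrictOrderedRing R] {s : ℕ → R} (hs : Antitone s) (hs0 : ∀ i, 0 ≤ s i) {n r : ℕ}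
    {e : Fin n → R} (he0 : ∀ j, 0 ≤ e j) (he1 : ∀ j, e j ≤ 1) (he : ∑ j, e j ≤ r) :
    ∑ j : Fin n, s j * e j ≤ ∑ i ∈ range r, s i := by
  -- compare termwise with the threshold `c = s r`
  set c := s r
  have hterm : ∀ j : Fin n, s j * e j ≤ c * e j + if (j : ℕ) < r then s j - c else 0 := by
    intro j
    split_ifs with hj
    · nlinarith [hs hj.le, he1 j]
    · nlinarith [hs (not_lt.1 hj), he0 j]
  have htail : ∑ j : Fin n, (if (j : ℕ) < r then s j - c else 0) ≤ ∑ i ∈ range r, (s i - c) := by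
    rw [Fin.sum_univ_eq_sum_range (fun i => if i < r then s i - c else 0), ← sum_filter]
    refine sum_le_sum_of_subset_of_nonneg (fun i hi => ?_) fun i hi _ => ?_
    · simpa using (mem_filter.1 hi).2
    · exact sub_nonneg.2 (hs (mem_range.1 hi).le)
  calc ∑ j : Fin n, s j * e j ≤ ∑ j : Fin n, (c * e j + if (j : ℕ) < r then s j - c else 0) :=
        sum_le_sum fun j _ => hterm j
    _ ≤ c * r + ∑ i ∈ range r, (s i - c) := by
        rw [sum_add_distrib, ← mul_sum]
        exact add_le_add (mul_le_mul_of_nonneg_left he (hs0 r)) htail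
    _ = ∑ i ∈ range r, s i := by
        rw [sum_sub_distrib, sum_const, card_range, nsmul_eq_mul]
        ring

theorem Matrix.trace_mul_diagonal_mul_transpose_le {R : Type*} [Field R] [LinearOrder R]
    [IsStrictOrderedRing R] {s : ℕ → R} (hs : Antitone s) (hs0 : ∀ i, 0 ≤ s i)
    {k : Type*} [Fintype k] {n r : ℕ} {P Q : Matrix k (Fin n) R}
    (hP : ∀ j, (Pᵀ * P) j j ≤ 1) (hQ : ∀ j, (Qᵀ * Q) j j ≤ 1)
    (hPr : trace (P * Pᵀ) ≤ r) (hQr : trace (Q * Qᵀ) ≤ r) :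
    trace (P * diagonal (fun j : Fin n => s j) * Qᵀ) ≤ ∑ i ∈ range r, s i := by
  set e : Fin n → R := fun j => ((Pᵀ * P) j j + (Qᵀ * Q) j j) / 2
  have hdiag : ∀ j, (Qᵀ * P) j j ≤ e j := fun j => by
    have := two_mul_dotProduct_le (Qᵀ j) (Pᵀ j)
    change Qᵀ j ⬝ᵥ Pᵀ j ≤ (Pᵀ j ⬝ᵥ Pᵀ j + Qᵀ j ⬝ᵥ Qᵀ j) / 2
    linarith
  have he0 : ∀ j, 0 ≤ e j := fun j =>
    div_nonneg (add_nonneg (sum_nonneg fun _ _ => mul_self_nonneg _)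
      (sum_nonneg fun _ _ => mul_self_nonneg _)) zero_le_two
  have he1 : ∀ j, e j ≤ 1 := fun j => by simp only [e]; linarith [hP j, hQ j]
  have he : ∑ j, e j ≤ r := by
    rw [← sum_div, sum_add_distrib]
    change (trace (Pᵀ * P) + trace (Qᵀ * Q)) / 2 ≤ r
    rw [trace_mul_comm Pᵀ, trace_mul_comm Qᵀ]
    linarith
  calc trace (P * diagonal (fun j : Fin n => s j) * Qᵀ)
      = ∑ j : Fin n, s j * (Qᵀ * P) j j := by
        rw [trace_mul_comm, ← Matrix.mul_assoc]
        simp [trace, mul_diagonal, mul_comm]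
    _ ≤ ∑ j : Fin n, s j * e j :=
        sum_le_sum fun j _ => mul_le_mul_of_nonneg_left (hdiag j) (hs0 j)
    _ ≤ ∑ i ∈ range r, s i := sum_mul_le_sum_range_of_antitone hs hs0 he0 he1 he

theorem Orthonormal.exists_orthonormal_extension_of_card_le {𝕜 E ι : Type*} [RCLike 𝕜]
    [NormedAddCommGroup E] [InnerProductSpace 𝕜 E] [FiniteDimensional 𝕜 E] [Fintype ι]
    (hι : Fintype.card ι ≤ Module.finrank 𝕜 E) {v : ι → E} {s : Set ι}
    (hv : Orthonormal 𝕜 (s.domRestrict v)) :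
    ∃ b : ι → E, Orthonormal 𝕜 b ∧ ∀ i ∈ s, b i = v i := by
  classical
  have hv' : Orthonormal 𝕜 ((Sum.inl '' s).domRestrict
      (Sum.elim v (0 : Fin (Module.finrank 𝕜 E - Fintype.card ι) → E))) := by
    rw [orthonormal_iff_ite] at hv ⊢
    rintro ⟨_, i, hi, rfl⟩ ⟨_, j, hj, rfl⟩
    simpa [Set.domRestrict, Subtype.ext_iff] using hv ⟨i, hi⟩ ⟨j, hj⟩
  obtain ⟨b, hb⟩ := hv'.exists_orthonormalBasis_extension_of_card_eq (by simp; omega)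
  exact ⟨b ∘ Sum.inl, b.orthonormal.comp _ Sum.inl_injective, fun i hi => hb _ ⟨i, hi, rfl⟩⟩

namespace Matrix

variable {ι κ : Type*} [Fintype κ] [DecidableEq ι]

theorem mul_transpose_eq_one_iff_orthonormal (A : Matrix ι κ ℝ) :
    A * Aᵀ = 1 ↔ Orthonormal ℝ (fun i => WithLp.toLp 2 (A i)) := by
  have hsymm : ∀ i j, (A * Aᵀ) j i = (A * Aᵀ) i j := fun i j => by
    rw [← transpose_apply (A * Aᵀ), transpose_mul, transpose_transpose]
  rw [orthonormal_iff_ite, ← Matrix.ext_iff]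
  simp only [inner_matrix_row_row, conjTranspose_eq_transpose_of_trivial, one_apply, hsymm]

theorem exists_mul_transpose_eq_one_extending_rows [Fintype ι]
    (hι : Fintype.card ι ≤ Fintype.card κ) (V : Matrix ι κ ℝ) {S : Set ι}
    (hV : V.submatrix ((↑) : S → ι) id * (V.submatrix ((↑) : S → ι) id)ᵀ = 1) :
    ∃ A : Matrix ι κ ℝ, A * Aᵀ = 1 ∧ ∀ i ∈ S, A i = V i := by
  rw [mul_transpose_eq_one_iff_orthonormal] at hV
  obtain ⟨b, hb, hbS⟩ := Orthonormal.exists_orthonormal_extension_of_card_le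
    (v := fun i => WithLp.toLp 2 (V i)) (s := S) (by simpa using hι) hV
  exact ⟨fun i => (b i).ofLp, (mul_transpose_eq_one_iff_orthonormal _).2 (by simpa using hb),
    fun i hi => by simp [hbS i hi]⟩

end Matrix

section SingularValues

variable {m n : ℕ}

theorem sval_nonneg (X : Matrix (Fin m) (Fin n) ℝ) (i : ℕ) : 0 ≤ sval X i := by
  unfold sval; split_ifs <;> positivity

theorem sval_antitone (X : Matrix (Fin m) (Fin n) ℝ) : Antitone (sval X) := by
  intro i j hij
  by_cases hj : j < n
  · have := Tuple.monotone_sort (fun j => -((isHermitian_transpose_mul_self X).eigenvalues j))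
      (show (⟨i, hij.trans_lt hj⟩ : Fin n) ≤ ⟨j, hj⟩ from hij)
    simp only [sval, dif_pos hj, dif_pos (hij.trans_lt hj)]
    exact Real.sqrt_le_sqrt (neg_le_neg_iff.1 this)
  · simpa [sval, hj] using sval_nonneg X i

theorem sval_sq (X : Matrix (Fin m) (Fin n) ℝ) (i : Fin n) :
    sval X i ^ 2 = (isHermitian_transpose_mul_self X).eigenvalues
      (Tuple.sort (fun j => -((isHermitian_transpose_mul_self X).eigenvalues j)) i) := by
  rw [sval, dif_pos i.isLt, Real.sq_sqrt]
  simpa using (posSemidef_conjTranspose_mul_self X).eigenvalues_nonneg _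

theorem exists_orthogonal_diagonalization_transpose_mul_self (X : Matrix (Fin m) (Fin n) ℝ) :
    ∃ W : Matrix (Fin n) (Fin n) ℝ,
      W * Wᵀ = 1 ∧ Wᵀ * (Xᵀ * X) * W = diagonal (fun i : Fin n => sval X i ^ 2) := by
  set hH := isHermitian_transpose_mul_self X
  set g := Tuple.sort (fun j => -hH.eigenvalues j)
  set V : Matrix (Fin n) (Fin n) ℝ := (hH.eigenvectorUnitary : Matrix (Fin n) (Fin n) ℝ)
  have hV : V * Vᵀ = 1 := by
    simpa [V, star_eq_conjTranspose] using Unitary.mul_star_self_of_mem hH.eigenvectorUnitary.2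
  have hD : Vᵀ * (Xᵀ * X) * V = diagonal hH.eigenvalues := by
    simpa [V, star_eq_conjTranspose] using hH.conjStarAlgAut_star_eigenvectorUnitary
  refine ⟨V.submatrix id g, ?_, ?_⟩
  · simpa [transpose_submatrix, submatrix_mul_equiv] using hV
  · rw [funext (sval_sq X)]
    calc (V.submatrix id g)ᵀ * (Xᵀ * X) * V.submatrix id g
        = (Vᵀ * (Xᵀ * X) * V).submatrix g g := by
          ext i j
          simp [mul_apply, Finset.sum_mul]
      _ = _ := by rw [hD, submatrix_diagonal_equiv]; rfl

theorem exists_svd (X : Matrix (Fin m) (Fin n) ℝ) :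
    ∃ (W : Matrix (Fin n) (Fin n) ℝ) (U : Matrix (Fin m) (Fin n) ℝ), W * Wᵀ = 1 ∧
      Uᵀ * U = diagonal (fun i : Fin n => if sval X i = 0 then 0 else 1) ∧
      X * W = U * diagonal (fun i : Fin n => sval X i) := by
  obtain ⟨W, hW, hD⟩ := exists_orthogonal_diagonalization_transpose_mul_self X
  set s : Fin n → ℝ := fun i => sval X i
  have hXW : (X * W)ᵀ * (X * W) = diagonal (fun i => s i ^ 2) := by
    simpa [transpose_mul, Matrix.mul_assoc] using hD
  -- `U = X W Σ⁻¹`, where `0⁻¹ = 0` makes `U` vanish on the columns with `σᵢ = 0`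
  refine ⟨W, X * W * diagonal (fun i => (s i)⁻¹), hW, ?_, ?_⟩
  · calc (X * W * diagonal (fun i => (s i)⁻¹))ᵀ * (X * W * diagonal (fun i => (s i)⁻¹))
        = diagonal (fun i => (s i)⁻¹) * ((X * W)ᵀ * (X * W)) * diagonal (fun i => (s i)⁻¹) := by
          simp only [transpose_mul, diagonal_transpose, Matrix.mul_assoc]
      _ = _ := by
          rw [hXW, diagonal_mul_diagonal, diagonal_mul_diagonal]
          congr 1; funext i
          split_ifs with h
          · change s i = 0 at h
            simp [h]
          · change s i ≠ 0 at h
            field_simp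
  · ext a j
    rw [Matrix.mul_assoc, diagonal_mul_diagonal, mul_diagonal]
    by_cases hj : s j = 0
    · have hcol := transpose_eq_zero_of_transpose_mul_self_apply_self_eq_zero
        (show ((X * W)ᵀ * (X * W)) j j = 0 by rw [hXW, diagonal_apply_eq, hj, sq, mul_zero])
      have : (X * W) a j = 0 := congrFun hcol a
      rw [this, zero_mul]
    · rw [inv_mul_cancel₀ hj, mul_one]

theorem exists_trace_eq_sum_sval {r : ℕ} (hr : r ≤ min m n) (X : Matrix (Fin m) (Fin n) ℝ) :
    ∃ (A : Matrix (Fin r) (Fin m) ℝ) (B : Matrix (Fin r) (Fin n) ℝ), A * Aᵀ = 1 ∧ B * Bᵀ = 1 ∧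
      trace (A * X * Bᵀ) = ∑ i ∈ range r, sval X i := by
  obtain ⟨W, U, hW, hU, hXW⟩ := exists_svd X
  set c : Fin r ↪ Fin n := Fin.castLEEmb (hr.trans (min_le_right m n))
  set S : Set (Fin r) := {i | sval X (c i) ≠ 0}
  have hUc : Uᵀ.submatrix c id * (Uᵀ.submatrix c id)ᵀ =
      diagonal (fun i => if sval X (c i) = 0 then 0 else 1) := by
    rw [submatrix_mul_transpose_submatrix_id, transpose_transpose, hU]
    exact submatrix_diagonal_embedding _ c
  obtain ⟨A, hA, hAS⟩ := exists_mul_transpose_eq_one_extending_rows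
    (by simpa using hr.trans (min_le_left m n)) (Uᵀ.submatrix c id) (S := S) (by
      rw [submatrix_mul_transpose_submatrix_id, hUc]
      ext ⟨i, hi⟩ ⟨j, hj⟩
      simp [diagonal_apply, one_apply, Subtype.ext_iff, show sval X (c i) ≠ 0 from hi])
  refine ⟨A, Wᵀ.submatrix c id, hA, ?_, ?_⟩
  · rw [submatrix_mul_transpose_submatrix_id, transpose_transpose, mul_eq_one_comm.1 hW]
    exact submatrix_one_embedding c
  · have hterm : ∀ i, (A * X * (Wᵀ.submatrix c id)ᵀ) i i = sval X i := fun i => by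
      have hdot : (A * X * (Wᵀ.submatrix c id)ᵀ) i i = (A * U) i (c i) * sval X i := by
        change (A * X * W) i (c i) = _
        rw [Matrix.mul_assoc, hXW, ← Matrix.mul_assoc, mul_diagonal]
        rfl
      by_cases hi : sval X i = 0
      · rw [hdot, hi, mul_zero]
      · have hAU : (A * U) i (c i) = (Uᵀ * U) (c i) (c i) := congrArg (· ⬝ᵥ Uᵀ (c i)) (hAS i hi)
        rw [hdot, hAU, hU, diagonal_apply_eq, if_neg (show sval X (c i) ≠ 0 from hi), one_mul]
    simp only [trace, Matrix.diag, hterm]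
    exact Fin.sum_univ_eq_sum_range (sval X) r

theorem trace_le_sum_sval {r : ℕ} (X : Matrix (Fin m) (Fin n) ℝ) {A : Matrix (Fin r) (Fin m) ℝ}
    {B : Matrix (Fin r) (Fin n) ℝ} (hA : A * Aᵀ = 1) (hB : B * Bᵀ = 1) :
    trace (A * X * Bᵀ) ≤ ∑ i ∈ range r, sval X i := by
  obtain ⟨W, U, hW, hU, hXW⟩ := exists_svd X
  have hU' : U * Uᵀ * U = U := mul_transpose_mul_self_eq_self hU fun j => by
    split_ifs <;> simp
  have hW' : W * Wᵀ * W = W := by rw [hW, Matrix.one_mul]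
  calc trace (A * X * Bᵀ)
      = trace ((A * U) * diagonal (fun i : Fin n => sval X i) * (B * W)ᵀ) := by
        rw [Matrix.mul_assoc A U, ← hXW, transpose_mul, ← Matrix.mul_assoc A X W,
          Matrix.mul_assoc (A * X) W, ← Matrix.mul_assoc W, hW, Matrix.one_mul]
    _ ≤ _ := trace_mul_diagonal_mul_transpose_le (sval_antitone X) (sval_nonneg X)
        (mul_transpose_mul_self_apply_self_le_one hA hU')
        (mul_transpose_mul_self_apply_self_le_one hB hW')
        (by simpa using trace_mul_mul_transpose_le_card hA hU')
        (by simpa using trace_mul_mul_transpose_le_card hB hW')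

end SingularValues

/-- There exist matrices `A ∈ ℝ^{r×m}`, `B ∈ ℝ^{r×n}` with `A·Aᵀ = I_r`, `B·Bᵀ = I_r` achieving
`tr(A·X·Bᵀ) = Σ_{i=1}^r σ_i(X)`; consequently `Σ_{i=1}^r σ_i(X)` is the maximum of
`tr(A·X·Bᵀ)` over all such pairs. -/
theorem sum_singularValues_isGreatest_trace {m n r : ℕ} (hr : r ≤ min m n)
    (X : Matrix (Fin m) (Fin n) ℝ) :
    IsGreatest {t : ℝ | ∃ (A : Matrix (Fin r) (Fin m) ℝ) (B : Matrix (Fin r) (Fin n) ℝ),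
        A * Aᵀ = 1 ∧ B * Bᵀ = 1 ∧ Matrix.trace (A * X * Bᵀ) = t}
      (∑ i ∈ Finset.range r, sval X i) := by
  refine ⟨exists_trace_eq_sum_sval hr X, ?_⟩
  rintro _ ⟨A, B, hA, hB, rfl⟩
  exact trace_le_sum_sval X hA hB
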